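/- (Necessary condition of invariance.) Let u be admissible for the functional 𝒥[u] = ∫_{Δ_n} F(t, u(t), ∇_{B_{P¹}}^α u(t), ∇_{K_{P²}}^β u(t)) dt with F ∈ C¹, and let ξ ∈ C¹(Δ̄_n × ℝ^N; ℝ^N) be such that for the family of transformations ū_ε(t) = u(t) + ε ξ(t, u(t)) the functions B_{P¹_{t_i}}^{α_i}(ξ_k(·, u(·))) and K_{P²_{t_i}}^{β_i}(ξ_k(·, u(·))) exist and are continuous on Δ̄_n. If 𝒥 is invariant under this family, i.e., for every ε near 0 and every subbox Δ_n* ⊆ Δ_n one has ∫_{Δ_n*} F(t, u, ∇_{B_{P¹}}^α u, ∇_{K_{P²}}^β u) dt = ∫_{Δ_n*} F(t, ū_ε, ∇_{B_{P¹}}^α ū_ε, ∇_{K_{P²}}^β ū_ε) dt, then for all t ∈ Δ_n: Σ_{k=1}^N ( ∂F/∂u_k {u}(t) · ξ_k(t, u(t)) + Σ_{i=1}^n [ ∂F/∂(B_{P¹_{t_i}}^{α_i} u_k){u}(t) · B_{P¹_{t_i}}^{α_i}(ξ_k(·, u(·)))(t) + ∂F/∂(K_{P²_{t_i}}^{β_i}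 u_k){u}(t) · K_{P²_{t_i}}^{β_i}(ξ_k(·, u(·)))(t) ] ) = 0. -/

import Mathlib

/-!
The fractional operators are linear along the family `ū_ε = u + ε ξ(·, u)`, so the Lagrangian
evaluated at `ū_ε` is `G (jet t + ε • dir t)`, where `G = uncurry₄ F`,
`jet t = (t, u, ∇_B u, ∇_K u)` and `dir t = (0, ξ, ∇_B ξ, ∇_K ξ)`. Invariance makes
`ε ↦ ∫_S G (jet + ε • dir)` constant on every subbox `S`; differentiating under the integral sign
at `ε = 0` gives `∫_S dG(jet)(dir) = 0`. Small sup-norm balls are subboxes, so the continuous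
function `dG(jet)(dir)` vanishes on `Δ_n`, and in coordinates it is the stated sum.
-/

open MeasureTheory

/-- The open box `Δ_n = (a_1,b_1) × ⋯ × (a_n,b_n) ⊂ ℝⁿ`. -/
def box (n : ℕ) (a b : Fin n → ℝ) : Set (Fin n → ℝ) :=
  Set.univ.pi fun i => Set.Ioo (a i) (b i)

/-- The closed box `Δ̄_n = [a_1,b_1] × ⋯ × [a_n,b_n]`. -/
def closedBox (n : ℕ) (a b : Fin n → ℝ) : Set (Fin n → ℝ) :=
  Set.univ.pi fun i => Set.Icc (a i) (b i)

/-- The boundary `∂Δ_n` of the box. -/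
def boundaryBox (n : ℕ) (a b : Fin n → ℝ) : Set (Fin n → ℝ) :=
  closedBox n a b \ box n a b

/-- The generalized partial fractional integral `K_{P_{t_i}}^{α}` of order `α`
(with kernel `k = k_α`) and parameter set `P_{t_i} = ⟨a_i, t_i, b_i, p, q⟩`:
`(K f)(t) = p ∫_{a_i}^{t_i} k(t_i−τ) f(…,τ,…) dτ + q ∫_{t_i}^{b_i} k(τ−t_i) f(…,τ,…) dτ`. -/
noncomputable def partK (n : ℕ) (a b : Fin n → ℝ) (i : Fin n) (p q : ℝ) (k : ℝ → ℝ)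
    (f : (Fin n → ℝ) → ℝ) (t : Fin n → ℝ) : ℝ :=
  p * ∫ τ in (a i)..(t i), k (t i - τ) * f (Function.update t i τ) +
  q * ∫ τ in (t i)..(b i), k (τ - t i) * f (Function.update t i τ)

/-- Partial derivative `∂f/∂t_i`. -/
noncomputable def pderiv (n : ℕ) (i : Fin n) (f : (Fin n → ℝ) → ℝ) (t : Fin n → ℝ) : ℝ :=
  deriv (fun s => f (Function.update t i s)) (t i)

/-- The generalized partial Riemann–Liouville fractional derivative
`A_{P_{t_i}}^{α} f = ∂/∂t_i (K_{P_{t_i}}^{1−α} f)`, where `k` is the kernel `k_{1−α}`. -/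
noncomputable def partA (n : ℕ) (a b : Fin n → ℝ) (i : Fin n) (p q : ℝ) (k : ℝ → ℝ)
    (f : (Fin n → ℝ) → ℝ) (t : Fin n → ℝ) : ℝ :=
  pderiv n i (partK n a b i p q k f) t

/-- The generalized partial Caputo fractional derivative
`B_{P_{t_i}}^{α} f = K_{P_{t_i}}^{1−α} (∂f/∂t_i)`, where `k` is the kernel `k_{1−α}`. -/
noncomputable def partB (n : ℕ) (a b : Fin n → ℝ) (i : Fin n) (p q : ℝ) (k : ℝ → ℝ)
    (f : (Fin n → ℝ) → ℝ) (t : Fin n → ℝ) : ℝ :=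
  partK n a b i p q k (pderiv n i f) t

/-- `∂F/∂u_k`: partial derivative of the Lagrangian `F(t, u, G, H)` with respect to
the `k`-th component of the second argument. -/
noncomputable def dFu (n N : ℕ)
    (F : (Fin n → ℝ) → (Fin N → ℝ) → (Fin n → Fin N → ℝ) → (Fin n → Fin N → ℝ) → ℝ)
    (k : Fin N) (t : Fin n → ℝ) (u : Fin N → ℝ) (G H : Fin n → Fin N → ℝ) : ℝ :=
  deriv (fun y => F t (Function.update u k y) G H) (u k)

/-- `∂F/∂G_{ik}`: partial derivative of `F(t, u, G, H)` with respect to the `(i,k)` entry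
of the third argument (the fractional gradient `∇_{B_{P¹}}^α u`). -/
noncomputable def dFG (n N : ℕ)
    (F : (Fin n → ℝ) → (Fin N → ℝ) → (Fin n → Fin N → ℝ) → (Fin n → Fin N → ℝ) → ℝ)
    (i : Fin n) (k : Fin N) (t : Fin n → ℝ) (u : Fin N → ℝ) (G H : Fin n → Fin N → ℝ) : ℝ :=
  deriv (fun y => F t u (Function.update G i (Function.update (G i) k y)) H) (G i k)

/-- `∂F/∂H_{ik}`: partial derivative of `F(t, u, G, H)` with respect to the `(i,k)` entry
of the fourth argument (the fractional gradient `∇_{K_{P²}}^β u`). -/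
noncomputable def dFH (n N : ℕ)
    (F : (Fin n → ℝ) → (Fin N → ℝ) → (Fin n → Fin N → ℝ) → (Fin n → Fin N → ℝ) → ℝ)
    (i : Fin n) (k : Fin N) (t : Fin n → ℝ) (u : Fin N → ℝ) (G H : Fin n → Fin N → ℝ) : ℝ :=
  deriv (fun y => F t u G (Function.update H i (Function.update (H i) k y))) (H i k)

/-- The generalized fractional gradient `∇_{B_{P}}^{α}` of a vector function,
as a matrix `(i,k) ↦ B_{P_{t_i}}^{α_i} w_k (t)`; `kk i` is the kernel `k_{1−α_i}`. -/
noncomputable def gradB (n N : ℕ) (a b : Fin n → ℝ) (p q : Fin n → ℝ) (kk : Fin n → ℝ → ℝ)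
    (w : (Fin n → ℝ) → Fin N → ℝ) (t : Fin n → ℝ) : Fin n → Fin N → ℝ :=
  fun i k => partB n a b i (p i) (q i) (kk i) (fun s => w s k) t

/-- The generalized fractional gradient `∇_{K_{P}}^{β}` of a vector function,
as a matrix `(i,k) ↦ K_{P_{t_i}}^{β_i} w_k (t)`; `kk i` is the kernel `k_{β_i}`. -/
noncomputable def gradK (n N : ℕ) (a b : Fin n → ℝ) (p q : Fin n → ℝ) (kk : Fin n → ℝ → ℝ)
    (w : (Fin n → ℝ) → Fin N → ℝ) (t : Fin n → ℝ) : Fin n → Fin N → ℝ :=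
  fun i k => partK n a b i (p i) (q i) (kk i) (fun s => w s k) t

open Set Filter Topology

section Integrals

variable {X E : Type*} [TopologicalSpace X] [T2Space X] [MeasurableSpace X]
  [OpensMeasurableSpace X] {μ : Measure X} [IsFiniteMeasureOnCompacts μ]
  [NormedAddCommGroup E] [NormedSpace ℝ E]

theorem hasDerivAt_setIntegral_comp_add_smul {K S : Set X} (hK : IsCompact K)
    (hS : MeasurableSet S) (hSK : S ⊆ K) {G : E → ℝ} (hG : ContDiff ℝ 1 G) {p v : X → E}
    (hp : ContinuousOn p K) (hv : ContinuousOn v K) :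
    HasDerivAt (fun ε : ℝ => ∫ x in S, G (p x + ε • v x) ∂μ)
      (∫ x in S, fderiv ℝ G (p x) (v x) ∂μ) 0 := by
  have hG' := hG.continuous_fderiv one_ne_zero
  have hline (ε : ℝ) : ContinuousOn (fun x => p x + ε • v x) K := hp.add (hv.const_smul ε)
  have hvK : ContinuousOn (fun z : ℝ × X => v z.2) (Icc (-1) 1 ×ˢ K) :=
    hv.comp continuousOn_snd fun _ hz => hz.2
  obtain ⟨C, hC⟩ := (isCompact_Icc.prod hK).exists_bound_of_continuousOn
    (f := fun z : ℝ × X => fderiv ℝ G (p z.2 + z.1 • v z.2) (v z.2))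
    ((hG'.comp_continuousOn ((hp.comp continuousOn_snd fun _ hz => hz.2).add
      (continuousOn_fst.smul hvK))).clm_apply hvK)
  have hbound : ∀ᵐ x ∂μ.restrict S, ∀ ε ∈ Metric.ball (0 : ℝ) 1,
      ‖fderiv ℝ G (p x + ε • v x) (v x)‖ ≤ C := by
    filter_upwards [self_mem_ae_restrict hS] with x hx ε hε
    rw [Metric.mem_ball, Real.dist_eq, sub_zero] at hε
    exact hC (ε, x) ⟨abs_le.1 hε.le, hSK hx⟩
  have hSfin : μ S < ⊤ := (measure_mono hSK).trans_lt hK.measure_lt_top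
  have key := hasDerivAt_integral_of_dominated_loc_of_deriv_le
    (F := fun ε x => G (p x + ε • v x)) (F' := fun ε x => fderiv ℝ G (p x + ε • v x) (v x))
    (Metric.ball_mem_nhds 0 one_pos)
    (.of_forall fun ε =>
      ((hG.continuous.comp_continuousOn (hline ε)).mono hSK).aestronglyMeasurable hS)
    (((hG.continuous.comp_continuousOn (hline 0)).integrableOn_compact hK).mono_set hSK)
    ((((hG'.comp_continuousOn (hline 0)).clm_apply hv).mono hSK).aestronglyMeasurable hS)
    hbound (integrableOn_const hSfin.ne)
    (.of_forall fun x ε _ => (hG.differentiable one_ne_zero _).hasFDerivAt.comp_hasDerivAt ε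
      (by simpa using ((hasDerivAt_id ε).smul_const (v x)).const_add (p x)))
  simpa using key.2

theorem setIntegral_fderiv_eq_zero_of_invariant {K S : Set X} (hK : IsCompact K)
    (hS : MeasurableSet S) (hSK : S ⊆ K) {G : E → ℝ} (hG : ContDiff ℝ 1 G) {p v : X → E}
    (hp : ContinuousOn p K) (hv : ContinuousOn v K)
    (hinv : ∀ ε : ℝ, ∫ x in S, G (p x + ε • v x) ∂μ = ∫ x in S, G (p x) ∂μ) :
    ∫ x in S, fderiv ℝ G (p x) (v x) ∂μ = 0 := by
  have h := hasDerivAt_setIntegral_comp_add_smul (μ := μ) hK hS hSK hG hp hv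
  rw [funext hinv] at h
  exact h.unique (hasDerivAt_const 0 _)

end Integrals

theorem eq_zero_of_forall_setIntegral_ball_eq_zero {X : Type*} [MetricSpace X]
    [ProperSpace X] [MeasurableSpace X] [OpensMeasurableSpace X] {μ : Measure X}
    [μ.IsOpenPosMeasure] [IsFiniteMeasureOnCompacts μ] {U : Set X} (hU : IsOpen U)
    {f : X → ℝ} (hf : ContinuousOn f U) {x : X} (hx : x ∈ U)
    (h : ∀ δ > 0, Metric.closedBall x δ ⊆ U → ∫ y in Metric.ball x δ, f y ∂μ = 0) :
    f x = 0 := by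
  by_contra hfx
  have hnear : ∀ᶠ y in 𝓝 x, y ∈ U ∧ |f y - f x| < |f x| / 2 :=
    (hU.eventually_mem hx).and ((hf.continuousAt (hU.mem_nhds hx)).eventually
      (Metric.ball_mem_nhds (f x) (half_pos (abs_pos.2 hfx))))
  obtain ⟨r, hr, hball⟩ := Metric.eventually_nhds_iff_ball.1 hnear
  set B := Metric.ball x (r / 2)
  have hclosed : Metric.closedBall x (r / 2) ⊆ Metric.ball x r :=
    Metric.closedBall_subset_ball (half_lt_self hr)
  have hint : IntegrableOn f B μ :=
    ((hf.mono fun y hy => (hball y (hclosed hy)).1).integrableOn_compact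
      (isCompact_closedBall x _)).mono_set Metric.ball_subset_closedBall
  have hfin : μ B < ⊤ := measure_ball_lt_top
  have hpos : 0 < μ.real B :=
    ENNReal.toReal_pos (Metric.measure_ball_pos μ x (half_pos hr)).ne' hfin.ne
  -- on `B`, `f` stays within `|f x| / 2` of `f x`, so its integral cannot vanish
  have hdev : ‖∫ y in B, (f y - f x) ∂μ‖ ≤ |f x| / 2 * μ.real B :=
    norm_setIntegral_le_of_norm_le_const hfin fun y hy =>
      (hball y (Metric.ball_subset_ball (half_le_self hr.le) hy)).2.le
  rw [integral_sub hint (integrableOn_const hfin.ne), h _ (half_pos hr) (hclosed.trans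
    fun y hy => (hball y hy).1), setIntegral_const, zero_sub, norm_neg, norm_smul,
    Real.norm_eq_abs, Real.norm_eq_abs, abs_of_pos hpos] at hdev
  nlinarith [abs_pos.2 hfx]

def uncurry₄ {α β γ δ ε : Type*} (F : α → β → γ → δ → ε) : α × β × γ × δ → ε :=
  fun x => F x.1 x.2.1 x.2.2.1 x.2.2.2

theorem hasDerivAt_update_update {ι κ : Type*} [Fintype ι] [DecidableEq ι] [Fintype κ]
    [DecidableEq κ] (G : ι → κ → ℝ) (i : ι) (k : κ) :
    HasDerivAt (fun y => Function.update G i (Function.update (G i) k y))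
      (Pi.single i (Pi.single k 1)) (G i k) := by
  refine hasDerivAt_pi.2 fun j => ?_
  rcases eq_or_ne j i with rfl | hj
  · simpa using hasDerivAt_update (G j) k (G j k)
  · simpa [Function.update_of_ne hj, Pi.single_eq_of_ne hj] using hasDerivAt_const (G i k) (G j)

section PartialDerivatives

variable {n N : ℕ}
  {F : (Fin n → ℝ) → (Fin N → ℝ) → (Fin n → Fin N → ℝ) → (Fin n → Fin N → ℝ) → ℝ}
  {t : Fin n → ℝ} {u : Fin N → ℝ} {G H : Fin n → Fin N → ℝ}

theorem dFu_eq_fderiv (hF : DifferentiableAt ℝ (uncurry₄ F) (t, u, G, H)) (k : Fin N) :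
    dFu n N F k t u G H = fderiv ℝ (uncurry₄ F) (t, u, G, H) (0, Pi.single k 1, 0, 0) :=
  (hF.hasFDerivAt.comp_hasDerivAt_of_eq (u k)
    ((hasDerivAt_const _ t).prodMk ((hasDerivAt_update u k _).prodMk
      ((hasDerivAt_const _ G).prodMk (hasDerivAt_const _ H)))) (by simp)).deriv

theorem dFG_eq_fderiv (hF : DifferentiableAt ℝ (uncurry₄ F) (t, u, G, H)) (i : Fin n)
    (k : Fin N) :
    dFG n N F i k t u G H =
      fderiv ℝ (uncurry₄ F) (t, u, G, H) (0, 0, Pi.single i (Pi.single k 1), 0) :=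
  (hF.hasFDerivAt.comp_hasDerivAt_of_eq (G i k)
    ((hasDerivAt_const _ t).prodMk ((hasDerivAt_const _ u).prodMk
      ((hasDerivAt_update_update G i k).prodMk (hasDerivAt_const _ H)))) (by simp)).deriv

theorem dFH_eq_fderiv (hF : DifferentiableAt ℝ (uncurry₄ F) (t, u, G, H)) (i : Fin n)
    (k : Fin N) :
    dFH n N F i k t u G H =
      fderiv ℝ (uncurry₄ F) (t, u, G, H) (0, 0, 0, Pi.single i (Pi.single k 1)) :=
  (hF.hasFDerivAt.comp_hasDerivAt_of_eq (H i k)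
    ((hasDerivAt_const _ t).prodMk ((hasDerivAt_const _ u).prodMk
      ((hasDerivAt_const _ G).prodMk (hasDerivAt_update_update H i k)))) (by simp)).deriv

theorem sum_dF_mul_eq_fderiv (hF : DifferentiableAt ℝ (uncurry₄ F) (t, u, G, H))
    (v : Fin N → ℝ) (V W : Fin n → Fin N → ℝ) :
    ∑ k, (dFu n N F k t u G H * v k +
        ∑ i, (dFG n N F i k t u G H * V i k + dFH n N F i k t u G H * W i k)) =
      fderiv ℝ (uncurry₄ F) (t, u, G, H) (0, v, V, W) := by
  have hdecomp : ((0 : Fin n → ℝ), v, V, W) = ∑ k, (v k • ((0 : Fin n → ℝ), Pi.single k 1, 0, 0) +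
      ∑ i, (V i k • ((0 : Fin n → ℝ), 0, Pi.single i (Pi.single k 1), 0) +
        W i k • ((0 : Fin n → ℝ), 0, 0, Pi.single i (Pi.single k 1)))) := by
    ext <;> simp [Prod.fst_sum, Prod.snd_sum, Finset.sum_apply, Pi.single_apply]
  rw [hdecomp]
  simp only [map_sum, map_add, map_smul, smul_eq_mul, dFu_eq_fderiv hF, dFG_eq_fderiv hF,
    dFH_eq_fderiv hF, mul_comm]

end PartialDerivatives

/- The binder `∫ τ in _.._, …` extends as far to the right as possible, so in `partK` the second
integral lies inside the first one; `kernelIntegral` spells out that parse. -/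
noncomputable def kernelIntegral (A B p q : ℝ) (κ ψ : ℝ → ℝ) (c : ℝ) : ℝ :=
  p * ∫ τ in A..c, (κ (c - τ) * ψ τ + q * ∫ σ in c..B, κ (σ - c) * ψ σ)

section KernelIntegral

variable {A B p q c : ℝ} {κ ψ φ : ℝ → ℝ}

theorem kernelIntegral_congr (hc : c ∈ Icc A B) (h : EqOn ψ φ (Ioo A B)) :
    kernelIntegral A B p q κ ψ c = kernelIntegral A B p q κ φ c := by
  unfold kernelIntegral
  rw [intervalIntegral.integral_congr_Ioo_of_le hc.2 fun σ hσ => by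
      rw [h (Ioo_subset_Ioo_left hc.1 hσ)],
    intervalIntegral.integral_congr_Ioo_of_le hc.1 fun τ hτ => by
      rw [h (Ioo_subset_Ioo_right hc.2 hτ)]]

theorem intervalIntegrable_kernel_mul (hκ : IntegrableOn κ (Ioo 0 (B - A))) (hc : c ∈ Icc A B)
    (hψ : ContinuousOn ψ (Icc A B)) :
    IntervalIntegrable (fun τ => κ (c - τ) * ψ τ) volume A c ∧
      IntervalIntegrable (fun τ => κ (τ - c) * ψ τ) volume c B := by
  have hκ' (d : ℝ) (hd0 : 0 ≤ d) (hd : d ≤ B - A) : IntervalIntegrable κ volume 0 d :=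
    (intervalIntegrable_iff_integrableOn_Ioo_of_le hd0).2
      (hκ.mono_set (Ioo_subset_Ioo_right hd))
  constructor
  · have := (hκ' (c - A) (by linarith [hc.1]) (by linarith [hc.2])).comp_sub_left c
    simp only [sub_zero, sub_sub_cancel] at this
    exact this.symm.mul_continuousOn (hψ.mono (uIcc_of_le hc.1 ▸ Icc_subset_Icc_right hc.2))
  · have := (hκ' (B - c) (by linarith [hc.2]) (by linarith [hc.1])).comp_sub_right c
    simp only [zero_add, sub_add_cancel] at this
    exact this.mul_continuousOn (hψ.mono (uIcc_of_le hc.2 ▸ Icc_subset_Icc_left hc.1))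

theorem kernelIntegral_add_mul (hκ : IntegrableOn κ (Ioo 0 (B - A))) (hc : c ∈ Icc A B)
    (hψ : ContinuousOn ψ (Icc A B)) (hφ : ContinuousOn φ (Icc A B)) (ε : ℝ) :
    kernelIntegral A B p q κ (fun τ => ψ τ + ε * φ τ) c =
      kernelIntegral A B p q κ ψ c + ε * kernelIntegral A B p q κ φ c := by
  obtain ⟨hψl, hψr⟩ := intervalIntegrable_kernel_mul hκ hc hψ
  obtain ⟨hφl, hφr⟩ := intervalIntegrable_kernel_mul hκ hc hφ
  have hlin {x y : ℝ} {g₁ g₂ : ℝ → ℝ} (h₁ : IntervalIntegrable g₁ volume x y)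
      (h₂ : IntervalIntegrable g₂ volume x y) :
      ∫ τ in x..y, (g₁ τ + ε * g₂ τ) = (∫ τ in x..y, g₁ τ) + ε * ∫ τ in x..y, g₂ τ := by
    rw [intervalIntegral.integral_add h₁ (h₂.const_mul ε), intervalIntegral.integral_const_mul]
  have hinner : ∫ σ in c..B, κ (σ - c) * (ψ σ + ε * φ σ) =
      (∫ σ in c..B, κ (σ - c) * ψ σ) + ε * ∫ σ in c..B, κ (σ - c) * φ σ := by
    simp only [mul_add, mul_left_comm _ ε]
    exact hlin hψr hφr
  set Iψ := ∫ σ in c..B, κ (σ - c) * ψ σ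
  set Iφ := ∫ σ in c..B, κ (σ - c) * φ σ
  calc p * ∫ τ in A..c, (κ (c - τ) * (ψ τ + ε * φ τ) + q * ∫ σ in c..B, κ (σ - c) * (ψ σ + ε * φ σ))
      = p * ∫ τ in A..c, ((κ (c - τ) * ψ τ + q * Iψ) + ε * (κ (c - τ) * φ τ + q * Iφ)) := by
        rw [hinner]
        congr 2 with τ
        ring
    _ = _ := by
        rw [hlin (hψl.add intervalIntegrable_const) (hφl.add intervalIntegrable_const)]
        simp only [kernelIntegral]
        ring

end KernelIntegral

section Box

variable {n : ℕ} {a b t : Fin n → ℝ}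

theorem box_subset_closedBox : box n a b ⊆ closedBox n a b :=
  pi_mono fun _ _ => Ioo_subset_Icc_self

theorem isOpen_box : IsOpen (box n a b) :=
  isOpen_set_pi finite_univ fun _ _ => isOpen_Ioo

theorem ball_eq_box {δ : ℝ} (hδ : 0 < δ) :
    Metric.ball t δ = box n (fun i => t i - δ) (fun i => t i + δ) := by
  simp only [ball_pi t hδ, Real.ball_eq_Ioo, box]

theorem update_mem_closedBox (ht : t ∈ closedBox n a b) {i : Fin n} {s : ℝ}
    (hs : s ∈ Icc (a i) (b i)) : Function.update t i s ∈ closedBox n a b :=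
  (update_mem_pi_iff_of_mem ht).2 fun _ => hs

theorem continuousOn_slice {f : (Fin n → ℝ) → ℝ} (hf : ContinuousOn f (closedBox n a b))
    (ht : t ∈ closedBox n a b) (i : Fin n) :
    ContinuousOn (fun s => f (Function.update t i s)) (Icc (a i) (b i)) :=
  hf.comp (contDiff_update (𝕜 := ℝ) 0 t i).continuous.continuousOn fun _ hs =>
    update_mem_closedBox ht hs

theorem contDiffOn_slice {f : (Fin n → ℝ) → ℝ} (hf : ContDiffOn ℝ 1 f (closedBox n a b))
    (ht : t ∈ closedBox n a b) (i : Fin n) :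
    ContDiffOn ℝ 1 (fun s => f (Function.update t i s)) (Icc (a i) (b i)) :=
  hf.comp (contDiff_update 1 t i).contDiffOn fun _ hs => update_mem_closedBox ht hs

end Box

section FractionalOperators

variable {n : ℕ} {a b t : Fin n → ℝ} {i : Fin n} {p q : ℝ} {κ : ℝ → ℝ}

theorem partK_eq_kernelIntegral (f : (Fin n → ℝ) → ℝ) :
    partK n a b i p q κ f t =
      kernelIntegral (a i) (b i) p q κ (fun s => f (Function.update t i s)) (t i) :=
  rfl

theorem partB_eq_kernelIntegral_derivWithin (f : (Fin n → ℝ) → ℝ) (ht : t i ∈ Icc (a i) (b i)) :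
    partB n a b i p q κ f t =
      kernelIntegral (a i) (b i) p q κ
        (derivWithin (fun s => f (Function.update t i s)) (Icc (a i) (b i))) (t i) := by
  refine kernelIntegral_congr ht fun τ hτ => ?_
  simp only [pderiv, Function.update_self, Function.update_idem]
  exact (derivWithin_of_mem_nhds (Icc_mem_nhds hτ.1 hτ.2)).symm

theorem partK_add_mul (hκ : IntegrableOn κ (Ioo 0 (b i - a i))) {f g : (Fin n → ℝ) → ℝ}
    (hf : ContinuousOn f (closedBox n a b)) (hg : ContinuousOn g (closedBox n a b))
    (ht : t ∈ closedBox n a b) (ε : ℝ) :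
    partK n a b i p q κ (fun s => f s + ε * g s) t =
      partK n a b i p q κ f t + ε * partK n a b i p q κ g t :=
  kernelIntegral_add_mul hκ (ht i trivial) (continuousOn_slice hf ht i)
    (continuousOn_slice hg ht i) ε

theorem partB_add_mul (hκ : IntegrableOn κ (Ioo 0 (b i - a i))) {f g : (Fin n → ℝ) → ℝ}
    (hf : ContDiffOn ℝ 1 f (closedBox n a b)) (hg : ContDiffOn ℝ 1 g (closedBox n a b))
    (ht : t ∈ box n a b) (ε : ℝ) :
    partB n a b i p q κ (fun s => f s + ε * g s) t =
      partB n a b i p q κ f t + ε * partB n a b i p q κ g t := by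
  have hti : t i ∈ Icc (a i) (b i) := Ioo_subset_Icc_self (ht i trivial)
  have hAB : a i < b i := (ht i trivial).1.trans (ht i trivial).2
  set I := Icc (a i) (b i)
  set ψ := fun s => f (Function.update t i s)
  set φ := fun s => g (Function.update t i s)
  have hψ : ContDiffOn ℝ 1 ψ I := contDiffOn_slice hf (box_subset_closedBox ht) i
  have hφ : ContDiffOn ℝ 1 φ I := contDiffOn_slice hg (box_subset_closedBox ht) i
  have hderiv : EqOn (derivWithin (fun s => ψ s + ε * φ s) I)
      (fun τ => derivWithin ψ I τ + ε * derivWithin φ I τ) (Ioo (a i) (b i)) := fun τ hτ => by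
    have hφτ := (hφ.differentiableOn one_ne_zero) τ (Ioo_subset_Icc_self hτ)
    rw [derivWithin_fun_add ((hψ.differentiableOn one_ne_zero) τ (Ioo_subset_Icc_self hτ))
        (hφτ.const_mul ε), derivWithin_const_mul ε hφτ]
  have hcont {w : ℝ → ℝ} (hw : ContDiffOn ℝ 1 w I) : ContinuousOn (derivWithin w I) I :=
    hw.continuousOn_derivWithin (uniqueDiffOn_Icc hAB) le_rfl
  rw [partB_eq_kernelIntegral_derivWithin _ hti, partB_eq_kernelIntegral_derivWithin _ hti,
    partB_eq_kernelIntegral_derivWithin _ hti, kernelIntegral_congr hti hderiv,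
    kernelIntegral_add_mul hκ hti (hcont hψ) (hcont hφ)]

end FractionalOperators

section Gradients

variable {n N : ℕ} {a b t p q : Fin n → ℝ} {kk : Fin n → ℝ → ℝ}
  {u w : (Fin n → ℝ) → Fin N → ℝ}

theorem gradK_add_smul (hkk : ∀ i, IntegrableOn (kk i) (Ioo 0 (b i - a i)))
    (hu : ContinuousOn u (closedBox n a b)) (hw : ContinuousOn w (closedBox n a b))
    (ht : t ∈ closedBox n a b) (ε : ℝ) :
    gradK n N a b p q kk (fun s k => u s k + ε * w s k) t =
      gradK n N a b p q kk u t + ε • gradK n N a b p q kk w t := by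
  ext i k
  exact partK_add_mul (hkk i) (continuousOn_pi.1 hu k) (continuousOn_pi.1 hw k) ht ε

theorem gradB_add_smul (hkk : ∀ i, IntegrableOn (kk i) (Ioo 0 (b i - a i)))
    (hu : ContDiffOn ℝ 1 u (closedBox n a b)) (hw : ContDiffOn ℝ 1 w (closedBox n a b))
    (ht : t ∈ box n a b) (ε : ℝ) :
    gradB n N a b p q kk (fun s k => u s k + ε * w s k) t =
      gradB n N a b p q kk u t + ε • gradB n N a b p q kk w t := by
  ext i k
  exact partB_add_mul (hkk i) (contDiffOn_pi.1 hu k) (contDiffOn_pi.1 hw k) ht ε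

end Gradients

theorem necessary_condition_of_invariance_general
    (n N : ℕ) (a b : Fin n → ℝ)
    (p1 q1 p2 q2 : Fin n → ℝ)
    (k1α kβ : Fin n → ℝ → ℝ)
    (hk1α : ∀ i, IntegrableOn (k1α i) (Set.Ioo 0 (b i - a i)))
    (hkβ : ∀ i, IntegrableOn (kβ i) (Set.Ioo 0 (b i - a i)))
    (F : (Fin n → ℝ) → (Fin N → ℝ) → (Fin n → Fin N → ℝ) → (Fin n → Fin N → ℝ) → ℝ)
    (hF : ContDiff ℝ 1 (fun x : (Fin n → ℝ) × (Fin N → ℝ) ×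
      (Fin n → Fin N → ℝ) × (Fin n → Fin N → ℝ) => F x.1 x.2.1 x.2.2.1 x.2.2.2))
    (u : (Fin n → ℝ) → Fin N → ℝ)
    -- admissibility of u
    (hu : ContDiffOn ℝ 1 u (closedBox n a b))
    (huB : ∀ i k, ContinuousOn
      (fun t => partB n a b i (p1 i) (q1 i) (k1α i) (fun s => u s k) t) (closedBox n a b))
    (huK : ∀ i k, ContinuousOn
      (fun t => partK n a b i (p2 i) (q2 i) (kβ i) (fun s => u s k) t) (closedBox n a b))
    -- the generator ξ of the family of transformations
    (ξ : (Fin n → ℝ) → (Fin N → ℝ) → Fin N → ℝ)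
    (hξ : ContDiff ℝ 1 (fun x : (Fin n → ℝ) × (Fin N → ℝ) => ξ x.1 x.2))
    (hξB : ∀ i k, ContinuousOn
      (fun t => partB n a b i (p1 i) (q1 i) (k1α i) (fun s => ξ s (u s) k) t)
      (closedBox n a b))
    (hξK : ∀ i k, ContinuousOn
      (fun t => partK n a b i (p2 i) (q2 i) (kβ i) (fun s => ξ s (u s) k) t)
      (closedBox n a b))
    -- invariance: for every ε and every subbox Δ_n^* ⊆ Δ_n the integrals agree
    (hinv : ∀ ε : ℝ, ∀ a' b' : Fin n → ℝ, box n a' b' ⊆ box n a b →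
      (∫ t in box n a' b',
        F t (u t) (gradB n N a b p1 q1 k1α u t) (gradK n N a b p2 q2 kβ u t)) =
      ∫ t in box n a' b',
        F t (fun k => u t k + ε * ξ t (u t) k)
          (gradB n N a b p1 q1 k1α (fun s k => u s k + ε * ξ s (u s) k) t)
          (gradK n N a b p2 q2 kβ (fun s k => u s k + ε * ξ s (u s) k) t)) :
    ∀ t ∈ box n a b,
      (∑ k : Fin N,
        (dFu n N F k t (u t) (gradB n N a b p1 q1 k1α u t) (gradK n N a b p2 q2 kβ u t)
            * ξ t (u t) k
         + ∑ i : Fin n,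
            (dFG n N F i k t (u t) (gradB n N a b p1 q1 k1α u t)
                (gradK n N a b p2 q2 kβ u t)
              * partB n a b i (p1 i) (q1 i) (k1α i) (fun s => ξ s (u s) k) t
             + dFH n N F i k t (u t) (gradB n N a b p1 q1 k1α u t)
                (gradK n N a b p2 q2 kβ u t)
              * partK n a b i (p2 i) (q2 i) (kβ i) (fun s => ξ s (u s) k) t))) = 0 := by
  intro t₀ ht₀
  have hF : ContDiff ℝ 1 (uncurry₄ F) := hF
  let ξu : (Fin n → ℝ) → Fin N → ℝ := fun s => ξ s (u s)
  let jet := fun t => (t, u t, gradB n N a b p1 q1 k1α u t, gradK n N a b p2 q2 kβ u t)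
  let dir := fun t => ((0 : Fin n → ℝ), ξu t, gradB n N a b p1 q1 k1α ξu t,
    gradK n N a b p2 q2 kβ ξu t)
  have hξu : ContDiffOn ℝ 1 ξu (closedBox n a b) := hξ.comp_contDiffOn (contDiffOn_id.prodMk hu)
  have hjet : ContinuousOn jet (closedBox n a b) :=
    continuousOn_id.prodMk (hu.continuousOn.prodMk
      ((continuousOn_pi' fun i => continuousOn_pi' (huB i)).prodMk
        (continuousOn_pi' fun i => continuousOn_pi' (huK i))))
  have hdir : ContinuousOn dir (closedBox n a b) :=
    continuousOn_const.prodMk (hξu.continuousOn.prodMk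
      ((continuousOn_pi' fun i => continuousOn_pi' (hξB i)).prodMk
        (continuousOn_pi' fun i => continuousOn_pi' (hξK i))))
  refine (sum_dF_mul_eq_fderiv (hF.differentiable one_ne_zero (jet t₀)) _ _ _).trans ?_
  refine eq_zero_of_forall_setIntegral_ball_eq_zero (μ := volume)
    (f := fun t => fderiv ℝ (uncurry₄ F) (jet t) (dir t)) isOpen_box
    (((hF.continuous_fderiv one_ne_zero).comp_continuousOn hjet).clm_apply hdir |>.mono
      box_subset_closedBox) ht₀ fun δ hδ hsub => ?_
  have hsub' := hsub.trans box_subset_closedBox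
  refine setIntegral_fderiv_eq_zero_of_invariant (isCompact_closedBall t₀ δ) measurableSet_ball
    Metric.ball_subset_closedBall hF (hjet.mono hsub') (hdir.mono hsub') fun ε => ?_
  have hball : box n _ _ ⊆ box n a b := ball_eq_box hδ ▸ Metric.ball_subset_closedBall.trans hsub
  rw [ball_eq_box hδ]
  refine (setIntegral_congr_fun isOpen_box.measurableSet fun t ht => ?_).trans
    (hinv ε _ _ hball).symm
  rw [gradB_add_smul hk1α hu hξu (hball ht),
    gradK_add_smul hkβ hu.continuousOn hξu.continuousOn (box_subset_closedBox (hball ht))]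
  simp only [jet, dir, Prod.smul_mk, Prod.mk_add_mk, smul_zero, add_zero]
  rfl

/-- Lemma (necessary condition of invariance): if the functional
`𝒥[u] = ∫_{Δ_n} F(t, u, ∇_{B_{P¹}}^α u, ∇_{K_{P²}}^β u) dt` is invariant under the
family of transformations `ū_ε(t) = u(t) + ε ξ(t, u(t))` (i.e. the integrals over every
subbox `Δ_n^* ⊆ Δ_n` agree for all ε), then
`Σ_k ( ∂F/∂u_k ξ_k + Σ_i [ ∂F/∂(B u_k) ⋅ B^{α_i}(ξ_k) + ∂F/∂(K u_k) ⋅ K^{β_i}(ξ_k) ] ) = 0`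
on `Δ_n`. Here `k1α i` is the kernel `k_{1−α_i}` and `kβ i` the kernel `k_{β_i}`. -/
theorem necessary_condition_of_invariance
    (n N : ℕ) (a b : Fin n → ℝ) (hab : ∀ j, a j < b j)
    (α β : Fin n → ℝ) (hα : ∀ i, 0 < α i ∧ α i < 1) (hβ : ∀ i, 0 < β i ∧ β i < 1)
    (p1 q1 p2 q2 : Fin n → ℝ)
    (k1α kβ : Fin n → ℝ → ℝ)
    (hk1α : ∀ i, IntegrableOn (k1α i) (Set.Ioo 0 (b i - a i)))
    (hkβ : ∀ i, IntegrableOn (kβ i) (Set.Ioo 0 (b i - a i)))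
    (F : (Fin n → ℝ) → (Fin N → ℝ) → (Fin n → Fin N → ℝ) → (Fin n → Fin N → ℝ) → ℝ)
    (hF : ContDiff ℝ 1 (fun x : (Fin n → ℝ) × (Fin N → ℝ) ×
      (Fin n → Fin N → ℝ) × (Fin n → Fin N → ℝ) => F x.1 x.2.1 x.2.2.1 x.2.2.2))
    (u : (Fin n → ℝ) → Fin N → ℝ)
    -- admissibility of u
    (hu : ContDiffOn ℝ 1 u (closedBox n a b))
    (huB : ∀ i k, ContinuousOn
      (fun t => partB n a b i (p1 i) (q1 i) (k1α i) (fun s => u s k) t) (closedBox n a b))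
    (huK : ∀ i k, ContinuousOn
      (fun t => partK n a b i (p2 i) (q2 i) (kβ i) (fun s => u s k) t) (closedBox n a b))
    -- the generator ξ of the family of transformations
    (ξ : (Fin n → ℝ) → (Fin N → ℝ) → Fin N → ℝ)
    (hξ : ContDiff ℝ 1 (fun x : (Fin n → ℝ) × (Fin N → ℝ) => ξ x.1 x.2))
    (hξB : ∀ i k, ContinuousOn
      (fun t => partB n a b i (p1 i) (q1 i) (k1α i) (fun s => ξ s (u s) k) t)
      (closedBox n a b))
    (hξK : ∀ i k, ContinuousOn
      (fun t => partK n a b i (p2 i) (q2 i) (kβ i) (fun s => ξ s (u s) k) t)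
      (closedBox n a b))
    -- invariance: for every ε and every subbox Δ_n^* ⊆ Δ_n the integrals agree
    (hinv : ∀ ε : ℝ, ∀ a' b' : Fin n → ℝ, box n a' b' ⊆ box n a b →
      (∫ t in box n a' b',
        F t (u t) (gradB n N a b p1 q1 k1α u t) (gradK n N a b p2 q2 kβ u t)) =
      ∫ t in box n a' b',
        F t (fun k => u t k + ε * ξ t (u t) k)
          (gradB n N a b p1 q1 k1α (fun s k => u s k + ε * ξ s (u s) k) t)
          (gradK n N a b p2 q2 kβ (fun s k => u s k + ε * ξ s (u s) k) t)) :
    ∀ t ∈ box n a b,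
      (∑ k : Fin N,
        (dFu n N F k t (u t) (gradB n N a b p1 q1 k1α u t) (gradK n N a b p2 q2 kβ u t)
            * ξ t (u t) k
         + ∑ i : Fin n,
            (dFG n N F i k t (u t) (gradB n N a b p1 q1 k1α u t)
                (gradK n N a b p2 q2 kβ u t)
              * partB n a b i (p1 i) (q1 i) (k1α i) (fun s => ξ s (u s) k) t
             + dFH n N F i k t (u t) (gradB n N a b p1 q1 k1α u t)
                (gradK n N a b p2 q2 kβ u t)
              * partK n a b i (p2 i) (q2 i) (kβ i) (fun s => ξ s (u s) k) t))) = 0 :=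
  necessary_condition_of_invariance_general n N a b p1 q1 p2 q2 k1α kβ hk1α hkβ F hF u hu huB huK ξ
    hξ hξB hξK hinv
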